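/- Let K be a bounded linear operator on H and let Λ = (Λ_i)_{i∈I} be a g-sequence. Then Λ is a K-g-frame for H if and only if Λ is a Bessel g-sequence and Range(K) ⊆ Range(T_Λ), where T_Λ is the synthesis operator of Λ. -/

import Mathlib

/-!
Both sides say that `‖K* f‖` is dominated by `‖T_Λ* f‖ = (∑ᵢ ‖Λᵢ f‖²)^(1/2)`: the left side is
the lower frame bound, and the right side is equivalent to it by Douglas' lemma,
`Range K ⊆ Range T ↔ ∃ c, ‖K* f‖ ≤ c ‖T* f‖`. For Douglas' lemma, a range inclusion factors
`K = T D` through the injective restriction of `T` to `(ker T)ᗮ`, with `D` bounded by the closed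
graph theorem, whence `‖K* f‖ ≤ ‖D*‖ ‖T* f‖`. Conversely, the bound makes `T* f ↦ ⟪K x, f⟫` a
bounded functional on `Range T*`; the Riesz representative `u` of a Hahn–Banach extension of it
satisfies `T u = K x`.
-/

open ContinuousLinearMap

noncomputable section

variable {I : Type*} {H : Type*} [NormedAddCommGroup H] [InnerProductSpace ℂ H] [CompleteSpace H]
  {G : I → Type*} [∀ i, NormedAddCommGroup (G i)] [∀ i, InnerProductSpace ℂ (G i)]
  [∀ i, CompleteSpace (G i)]

/-- `Λ` is a Bessel g-sequence: for some `B > 0`, `∑ᵢ ‖Λᵢ f‖² ≤ B ‖f‖²` for all `f`. -/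
def IsGBessel (Λ : ∀ i, H →L[ℂ] G i) : Prop :=
  ∃ B : ℝ, 0 < B ∧ ∀ f : H,
    Summable (fun i => ‖Λ i f‖ ^ 2) ∧ (∑' i, ‖Λ i f‖ ^ 2) ≤ B * ‖f‖ ^ 2

/-- `Λ` is a `K`-g-frame: for some `A, B > 0`,
`A ‖K* f‖² ≤ ∑ᵢ ‖Λᵢ f‖² ≤ B ‖f‖²` for all `f`. -/
def IsKgFrame (K : H →L[ℂ] H) (Λ : ∀ i, H →L[ℂ] G i) : Prop :=
  ∃ A B : ℝ, 0 < A ∧ 0 < B ∧ ∀ f : H,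
    Summable (fun i => ‖Λ i f‖ ^ 2) ∧
    A * ‖ContinuousLinearMap.adjoint K f‖ ^ 2 ≤ (∑' i, ‖Λ i f‖ ^ 2) ∧
    (∑' i, ‖Λ i f‖ ^ 2) ≤ B * ‖f‖ ^ 2

/-- `T : (⊕ᵢ Hᵢ)_{ℓ²} → H` is the synthesis operator of `Λ`, characterized by its adjoint
(the analysis operator) satisfying `(T* f)ᵢ = Λᵢ f` for all `f`. -/
def IsSynthesis (Λ : ∀ i, H →L[ℂ] G i) (T : lp G 2 →L[ℂ] H) : Prop :=
  ∀ (f : H) (i : I), (ContinuousLinearMap.adjoint T f : ∀ i, G i) i = Λ i f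

/-- `Γ` is a `K`-dual (Bessel g-sequence) of `Λ`: `K f = ∑ᵢ Λᵢ* (Γᵢ f)` for all `f`,
the sum converging in `H`. -/
def IsKDual (K : H →L[ℂ] H) (Λ Γ : ∀ i, H →L[ℂ] G i) : Prop :=
  ∀ f : H, HasSum (fun i => ContinuousLinearMap.adjoint (Λ i) (Γ i f)) (K f)

open scoped InnerProductSpace

theorem LinearMap.exists_strongDual_comp_eq_of_norm_le {𝕜 E V : Type*} [RCLike 𝕜]
    [NormedAddCommGroup E] [NormedSpace 𝕜 E] [AddCommGroup V] [Module 𝕜 V]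
    (ψ : V →ₗ[𝕜] 𝕜) (g : V →ₗ[𝕜] E) (c : ℝ) (h : ∀ v, ‖ψ v‖ ≤ c * ‖g v‖) :
    ∃ Φ : StrongDual 𝕜 E, ∀ v, Φ (g v) = ψ v := by
  obtain ⟨s, hs⟩ := g.rangeRestrict.exists_rightInverse_of_surjective g.range_rangeRestrict
  have hgs (w : LinearMap.range g) : g (s w) = w :=
    congr_arg Subtype.val (LinearMap.congr_fun hs w)
  let φ : StrongDual 𝕜 (LinearMap.range g) :=
    (ψ ∘ₗ s).mkContinuous c fun w => by simpa [hgs] using h (s w)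
  obtain ⟨Φ, hΦ, -⟩ := exists_extension_norm_eq _ φ
  refine ⟨Φ, fun v => ?_⟩
  -- `s (g v)` and `v` differ by an element of `ker g`, on which `ψ` vanishes by the bound.
  have hker : ψ (s (g.rangeRestrict v) - v) = 0 := by
    simpa [hgs] using h (s (g.rangeRestrict v) - v)
  rw [map_sub, sub_eq_zero] at hker
  simpa [φ, hker] using hΦ (g.rangeRestrict v)

namespace ContinuousLinearMap

theorem exists_comp_eq_of_range_subset {𝕜 E F V : Type*} [RCLike 𝕜]
    [NormedAddCommGroup E] [InnerProductSpace 𝕜 E] [CompleteSpace E]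
    [NormedAddCommGroup F] [NormedSpace 𝕜 F] [CompleteSpace F]
    [NormedAddCommGroup V] [NormedSpace 𝕜 V] (T : E →L[𝕜] V) (K : F →L[𝕜] V)
    (h : Set.range K ⊆ Set.range T) : ∃ D : F →L[𝕜] E, T ∘L D = K := by
  let M := T.kerᗮ
  let T₀ : M →L[𝕜] V := T ∘L M.subtypeL
  have hinj : Function.Injective T₀ := by
    refine (injective_iff_map_eq_zero T₀).2 fun m hm => ?_
    exact Subtype.ext (Submodule.disjoint_def.1 T.ker.orthogonal_disjoint m hm m.2)
  have hrange : ∀ x, K x ∈ T₀.range := by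
    intro x
    obtain ⟨u, hu⟩ := h ⟨x, rfl⟩
    refine ⟨⟨u - T.ker.starProjection u, T.ker.sub_starProjection_mem_orthogonal u⟩, ?_⟩
    have hker : T (T.ker.starProjection u) = 0 := T.ker.starProjection_apply_mem u
    simp [T₀, hker, hu]
  let D₀ : F →ₗ[𝕜] M := (LinearEquiv.ofInjective (T₀ : M →ₗ[𝕜] V) hinj).symm ∘ₗ
    (K : F →ₗ[𝕜] V).codRestrict _ hrange
  have hD₀ : ∀ x, T₀ (D₀ x) = K x := fun x =>
    LinearEquiv.ofInjective_symm_apply (f := (T₀ : M →ₗ[𝕜] V)) (h := hinj) _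
  have hgraph : (D₀.graph : Set (F × M)) = {p | T₀ p.2 = K p.1} := by
    ext p
    simp only [SetLike.mem_coe, LinearMap.mem_graph_iff, Set.mem_ofPred_eq]
    exact ⟨fun hp => hp ▸ hD₀ p.1, fun hp => hinj (by rw [hp, hD₀])⟩
  have hcont : Continuous D₀ := D₀.continuous_of_isClosed_graph (by
    rw [hgraph]; exact isClosed_eq (by fun_prop) (by fun_prop))
  exact ⟨M.subtypeL ∘L ⟨D₀, hcont⟩, ext hD₀⟩

variable {𝕜 E F V : Type*} [RCLike 𝕜]
  [NormedAddCommGroup E] [InnerProductSpace 𝕜 E] [CompleteSpace E]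
  [NormedAddCommGroup F] [InnerProductSpace 𝕜 F] [CompleteSpace F]
  [NormedAddCommGroup V] [InnerProductSpace 𝕜 V] [CompleteSpace V]

theorem mem_range_of_norm_inner_le (T : E →L[𝕜] V) (y : V) (c : ℝ)
    (h : ∀ f, ‖⟪y, f⟫_𝕜‖ ≤ c * ‖adjoint T f‖) : y ∈ Set.range T := by
  obtain ⟨Φ, hΦ⟩ :=
    (innerₛₗ 𝕜 y).exists_strongDual_comp_eq_of_norm_le (adjoint T : V →ₗ[𝕜] E) c h
  refine ⟨(InnerProductSpace.toDual 𝕜 E).symm Φ, ext_inner_right 𝕜 fun f => ?_⟩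
  simpa [← adjoint_inner_right] using hΦ f

/-- Douglas' lemma. -/
theorem range_subset_range_iff_exists_norm_adjoint_le (T : E →L[𝕜] V) (K : F →L[𝕜] V) :
    Set.range K ⊆ Set.range T ↔ ∃ c, ∀ f, ‖adjoint K f‖ ≤ c * ‖adjoint T f‖ := by
  constructor
  · intro h
    obtain ⟨D, rfl⟩ := T.exists_comp_eq_of_range_subset K h
    refine ⟨‖adjoint D‖, fun f => ?_⟩
    rw [adjoint_comp, comp_apply]
    exact (adjoint D).le_opNorm _
  · rintro ⟨c, h⟩ _ ⟨x, rfl⟩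
    refine T.mem_range_of_norm_inner_le (K x) (‖x‖ * c) fun f => ?_
    calc ‖⟪K x, f⟫_𝕜‖ = ‖⟪x, adjoint K f⟫_𝕜‖ := by rw [adjoint_inner_right]
      _ ≤ ‖x‖ * ‖adjoint K f‖ := norm_inner_le_norm _ _
      _ ≤ ‖x‖ * (c * ‖adjoint T f‖) := by gcongr; exact h f
      _ = ‖x‖ * c * ‖adjoint T f‖ := by ring

end ContinuousLinearMap

theorem exists_pos_mul_sq_le_iff_exists_le_mul {α : Type*} {u v : α → ℝ} (hu : 0 ≤ u)
    (hv : 0 ≤ v) : (∃ A, 0 < A ∧ ∀ x, A * u x ^ 2 ≤ v x ^ 2) ↔ ∃ c, ∀ x, u x ≤ c * v x := by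
  constructor
  · rintro ⟨A, hA, h⟩
    refine ⟨(√A)⁻¹, fun x => ?_⟩
    rw [inv_mul_eq_div, le_div_iff₀ (Real.sqrt_pos.2 hA)]
    have := Real.sqrt_le_sqrt (h x)
    rwa [Real.sqrt_mul hA.le, Real.sqrt_sq (hu x), Real.sqrt_sq (hv x), mul_comm] at this
  · rintro ⟨c, h⟩
    refine ⟨(max c 1 ^ 2)⁻¹, by positivity, fun x => ?_⟩
    have hc : u x ≤ max c 1 * v x :=
      (h x).trans (mul_le_mul_of_nonneg_right (le_max_left c 1) (hv x))
    rw [inv_mul_le_iff₀ (by positivity), ← mul_pow]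
    exact pow_le_pow_left₀ (hu x) hc 2

theorem lp.hasSum_norm_sq {α : Type*} {E : α → Type*} [∀ i, NormedAddCommGroup (E i)]
    (f : lp E 2) : HasSum (fun i => ‖f i‖ ^ 2) (‖f‖ ^ 2) := by
  simpa using lp.hasSum_norm (p := 2) (by norm_num) f

theorem IsGBessel.exists_analysis {ι E : Type*} {F : ι → Type*} [NormedAddCommGroup E]
    [InnerProductSpace ℂ E] [∀ i, NormedAddCommGroup (F i)] [∀ i, InnerProductSpace ℂ (F i)]
    {Λ : ∀ i, E →L[ℂ] F i} (hΛ : IsGBessel Λ) : ∃ S : E →L[ℂ] lp F 2, ∀ f i, S f i = Λ i f := by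
  obtain ⟨B, -, hB⟩ := hΛ
  have hmem (f : E) : Memℓp (fun i => Λ i f) 2 := memℓp_gen (by simpa using (hB f).1)
  let S : E →ₗ[ℂ] lp F 2 :=
    { toFun f := ⟨fun i => Λ i f, hmem f⟩
      map_add' f g := by ext i; simp; rfl
      map_smul' c f := by ext i; simp }
  have hS (f : E) : ‖S f‖ ≤ √B * ‖f‖ := by
    have hsq : ‖S f‖ ^ 2 ≤ B * ‖f‖ ^ 2 := (lp.hasSum_norm_sq (S f)).tsum_eq ▸ (hB f).2
    have := Real.sqrt_le_sqrt hsq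
    rwa [Real.sqrt_sq (norm_nonneg _), Real.sqrt_mul' _ (sq_nonneg _),
      Real.sqrt_sq (norm_nonneg _)] at this
  exact ⟨S.mkContinuous √B hS, fun f i => rfl⟩

theorem IsSynthesis.hasSum_norm_sq {Λ : ∀ i, H →L[ℂ] G i} {T : lp G 2 →L[ℂ] H}
    (hT : IsSynthesis Λ T) (f : H) :
    HasSum (fun i => ‖Λ i f‖ ^ 2) (‖adjoint T f‖ ^ 2) := by
  simpa [hT f] using lp.hasSum_norm_sq (adjoint T f)

/-- `Λ` is a `K`-g-frame iff `Λ` is a Bessel g-sequence and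
`Range(K) ⊆ Range(T_Λ)`, where `T_Λ` is the synthesis operator of `Λ`. -/
theorem isKgFrame_iff_range_subset_range_synthesis
    (K : H →L[ℂ] H) (Λ : ∀ i, H →L[ℂ] G i) :
    IsKgFrame K Λ ↔
      IsGBessel Λ ∧ ∃ T : lp G 2 →L[ℂ] H, IsSynthesis Λ T ∧
        Set.range K ⊆ Set.range T := by
  have hrange_iff (T : lp G 2 →L[ℂ] H) (hT : IsSynthesis Λ T) :
      Set.range K ⊆ Set.range T ↔
        ∃ A, 0 < A ∧ ∀ f, A * ‖adjoint K f‖ ^ 2 ≤ ∑' i, ‖Λ i f‖ ^ 2 := by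
    simp only [T.range_subset_range_iff_exists_norm_adjoint_le, (hT.hasSum_norm_sq _).tsum_eq]
    exact (exists_pos_mul_sq_le_iff_exists_le_mul (fun _ => norm_nonneg _)
      fun _ => norm_nonneg _).symm
  constructor
  · rintro ⟨A, B, hA, hB, h⟩
    have hΛ : IsGBessel Λ := ⟨B, hB, fun f => ⟨(h f).1, (h f).2.2⟩⟩
    obtain ⟨S, hS⟩ := hΛ.exists_analysis
    have hT : IsSynthesis Λ (adjoint S) := by simpa [IsSynthesis] using hS
    exact ⟨hΛ, adjoint S, hT, (hrange_iff _ hT).2 ⟨A, hA, fun f => (h f).2.1⟩⟩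
  · rintro ⟨⟨B, hB, hΛ⟩, T, hT, hKT⟩
    obtain ⟨A, hA, hAK⟩ := (hrange_iff T hT).1 hKT
    exact ⟨A, B, hA, hB, fun f => ⟨(hΛ f).1, hAK f, (hΛ f).2⟩⟩
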